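/- arXiv:1012.4047 — 2 statements merged into one kernel-verified Lean document; each statement's English description precedes it below -/
import Mathlib

section
/- Let b be a nonnegative even integer with 4 | b. Then E_b ≡ 1 - 11b + 15b^2 + b^3 - b^4 (mod 2^{10}). -/
/-- The Euler numbers `E n`, defined by `E 0 = 1`, `E (2n-1) = 0` for `n ≥ 1`,
and `∑_{r=0}^{n} C(2n, 2r) * E (2r) = 0` for `n ≥ 1`. -/
def eulerE : ℕ → ℤ
  | 0 => 1
  | 1 => 0
  | n + 2 =>
      if Even n then
        -∑ r ∈ (Finset.range (n / 2 + 1)).attach,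
          ((n + 2).choose (2 * r.1) : ℤ) * eulerE (2 * r.1)
      else 0
  decreasing_by
    have := r.2
    simp only [Finset.mem_range] at this
    omega


/-!
Let `eulerResidue r` be the value of `1 - 11b + 15b² + b³ - b⁴` at `b = 2r` when `r` is even
and of `849 + 133b - 25b² + b³` when `r` is odd. Then `E (2r) ≡ eulerResidue r [ZMOD 2 ^ 10]`
by strong induction, because the residues satisfy the same recurrence
`∑ r ≤ n, C(2n, 2r) x_r ≡ 0`. For `n < 14` this is a finite check. For larger `n`, a filter
with the fourth roots of unity `±1, ±i` writes four times the recurrence sum as four full binomial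
sums `∑ k, C(M, k) p(k) z ^ k` over `ℤ[i]`, where `deg p ≤ 4`. Expanding `p` in the
falling-factorial basis turns each sum into multiples of `(1 + z) ^ (M - j)` with `j ≤ 4`, and
`2 ∣ (1 + z) ^ 2`.
-/

open Finset Polynomial

theorem Finset.sum_range_two_mul_add_one_of_odd_eq_zero {M : Type*} [AddCommMonoid M]
    (f : ℕ → M) (hf : ∀ r, f (2 * r + 1) = 0) (n : ℕ) :
    ∑ k ∈ range (2 * n + 1), f k = ∑ r ∈ range (n + 1), f (2 * r) := by
  induction n with
  | zero => simp
  | succ n ih =>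
    rw [show 2 * (n + 1) + 1 = 2 * n + 1 + 1 + 1 by ring, sum_range_succ, sum_range_succ, ih,
      hf, add_zero, sum_range_succ _ (n + 1)]
    rfl

theorem degree_sub_C_coeff_mul_descPochhammer_lt {S : Type*} [Ring S] [Nontrivial S]
    [NoZeroDivisors S] {p : S[X]} {d : ℕ} (hp : p.degree < ↑(d + 1)) :
    (p - C (p.coeff d) * descPochhammer S d).degree < d := by
  rw [degree_lt_iff_coeff_zero] at hp ⊢
  intro m hm
  rcases hm.eq_or_lt with rfl | hm
  · have hmonic := (monic_descPochhammer S d).coeff_natDegree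
    rw [descPochhammer_natDegree] at hmonic
    simp [hmonic]
  · simp [hp m hm, coeff_eq_zero_of_natDegree_lt ((descPochhammer_natDegree S d).trans_lt hm)]

section BinomialSums

variable {R : Type*} [CommRing R]

theorem sum_choose_mul_descFactorial_mul_pow (z : R) (j M : ℕ) :
    ∑ k ∈ range (M + 1), (M.choose k * k.descFactorial j : R) * z ^ k
      = M.descFactorial j * z ^ j * (1 + z) ^ (M - j) := by
  induction j generalizing M with
  | zero =>
    simp only [Nat.descFactorial_zero, Nat.cast_one, mul_one, pow_zero, Nat.sub_zero, one_mul,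
      add_comm 1 z, add_pow, one_pow]
    exact sum_congr rfl fun k _ => by ring
  | succ j ih =>
    cases M with
    | zero => simp
    | succ M =>
      have hterm (k : ℕ) :
          ((M + 1).choose (k + 1) * (k + 1).descFactorial (j + 1) : R) * z ^ (k + 1)
            = (M + 1 : R) * z * ((M.choose k * k.descFactorial j : R) * z ^ k) := by
        rw [Nat.succ_descFactorial_succ]
        have hchoose := congrArg (Nat.cast (R := R)) (Nat.add_one_mul_choose_eq M k)
        push_cast at hchoose ⊢
        linear_combination (-(k.descFactorial j * z ^ (k + 1) : R)) * hchoose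
      rw [sum_range_succ', sum_congr rfl fun k _ => hterm k, ← mul_sum, ih,
        Nat.succ_descFactorial_succ, Nat.succ_sub_succ]
      simp only [Nat.zero_descFactorial_succ]
      push_cast
      ring

theorem two_pow_dvd_one_add_pow {z : R} (hz : (2 : R) ∣ 1 + z ^ 2) {e m : ℕ} (h : 2 * e ≤ m) :
    (2 : R) ^ e ∣ (1 + z) ^ m := by
  have h2 : (2 : R) ∣ (1 + z) ^ 2 := by
    obtain ⟨c, hc⟩ := hz
    exact ⟨z + c, by linear_combination hc⟩
  calc (2 : R) ^ e ∣ ((1 + z) ^ 2) ^ e := pow_dvd_pow_of_dvd h2 e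
    _ = (1 + z) ^ (2 * e) := by rw [← pow_mul]
    _ ∣ (1 + z) ^ m := pow_dvd_pow _ h

theorem two_pow_dvd_sum_choose_mul_eval_mul_pow {z : R} (hz : (2 : R) ∣ 1 + z ^ 2) {e M : ℕ}
    (p : ℤ[X]) (h : p.natDegree + 2 * e ≤ M) :
    (2 : R) ^ e ∣ ∑ k ∈ range (M + 1), (M.choose k * p.eval (k : ℤ) : R) * z ^ k := by
  suffices key : ∀ d, d + 2 * e ≤ M + 1 → ∀ p : ℤ[X], p.degree < d →
      (2 : R) ^ e ∣ ∑ k ∈ range (M + 1), (M.choose k * p.eval (k : ℤ) : R) * z ^ k from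
    key (p.natDegree + 1) (by omega) p
      (degree_le_natDegree.trans_lt (WithBot.coe_lt_coe.mpr (Nat.lt_succ_self _)))
  intro d
  induction d with
  | zero =>
    intro _ p hp
    obtain rfl : p = 0 := by
      rw [← degree_eq_bot]
      exact Nat.WithBot.lt_zero_iff.mp hp
    simp
  | succ d ih =>
    intro hd p hp
    set q := p - C (p.coeff d) * descPochhammer ℤ d
    have hq : q.degree < d := degree_sub_C_coeff_mul_descPochhammer_lt hp
    have hsplit (k : ℕ) :
        ((p.eval (k : ℤ) : ℤ) : R) = q.eval (k : ℤ) + p.coeff d * k.descFactorial d := by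
      simp [q, descPochhammer_eval_eq_descFactorial]
    simp only [hsplit, mul_add, add_mul, sum_add_distrib]
    refine dvd_add (ih (by omega) q hq) ?_
    have hlead : ∑ k ∈ range (M + 1), (M.choose k : R) * (p.coeff d * k.descFactorial d) * z ^ k
        = p.coeff d * M.descFactorial d * z ^ d * (1 + z) ^ (M - d) := by
      rw [mul_assoc, mul_assoc, ← mul_assoc (M.descFactorial d : R),
        ← sum_choose_mul_descFactorial_mul_pow, mul_sum]
      exact sum_congr rfl fun k _ => by ring
    rw [hlead]
    exact (two_pow_dvd_one_add_pow hz (e := e) (m := M - d) (by omega)).mul_left _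

end BinomialSums

theorem sum_choose_mul_eulerE {n : ℕ} (hn : n ≠ 0) :
    ∑ r ∈ range (n + 1), ((2 * n).choose (2 * r) : ℤ) * eulerE (2 * r) = 0 := by
  obtain ⟨k, rfl⟩ := Nat.exists_eq_add_one_of_ne_zero hn
  rw [sum_range_succ, Nat.choose_self, Nat.cast_one, one_mul,
    show 2 * (k + 1) = 2 * k + 2 by ring, eulerE, if_pos (even_two_mul k),
    sum_attach (range (2 * k / 2 + 1)) fun r => ((2 * k + 2).choose (2 * r) : ℤ) * eulerE (2 * r),
    Nat.mul_div_cancel_left k two_pos]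
  simp

-- Both residue classes of `b` mod 4 must be handled, since the recurrence mixes them.
noncomputable def eulerPoly₀ : ℤ[X] := 1 - 11 * X + 15 * X ^ 2 + X ^ 3 - X ^ 4

noncomputable def eulerPoly₂ : ℤ[X] := 849 + 133 * X - 25 * X ^ 2 + X ^ 3

noncomputable def eulerResidue (r : ℕ) : ℤ :=
  if Even r then eulerPoly₀.eval (2 * r : ℤ) else eulerPoly₂.eval (2 * r : ℤ)

theorem two_pow_ten_dvd_sum_choose_mul_eulerResidue_of_lt (n : ℕ) (hn : n ≠ 0) (hn14 : n < 14) :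
    (2 ^ 10 : ℤ) ∣ ∑ s ∈ range (n + 1), ((2 * n).choose (2 * s) : ℤ) * eulerResidue s := by
  suffices h : ∀ n < 14, n ≠ 0 →
      (2 ^ 10 : ℤ) ∣ ∑ s ∈ range (n + 1), ((2 * n).choose (2 * s) : ℤ) * eulerResidue s from
    h n hn14 hn
  simp only [eulerResidue, eulerPoly₀, eulerPoly₂, eval_add, eval_sub, eval_mul, eval_pow, eval_X,
    eval_one, eval_ofNat]
  decide

-- The filter `1 ^ k + (-1) ^ k` keeps even `k = 2 * s`, and `i ^ k + (-i) ^ k = ±2` then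
-- distinguishes `4 ∣ k` from `k ≡ 2 [MOD 4]`.
theorem four_mul_eulerResidue_eq {R : Type*} [CommRing R] {i : R} (hi : i ^ 2 = -1) (s : ℕ) :
    4 * (eulerResidue s : R)
      = (((eulerPoly₀ + eulerPoly₂).eval (2 * s : ℤ) : ℤ) : R) * (1 ^ (2 * s) + (-1) ^ (2 * s))
        + (((eulerPoly₀ - eulerPoly₂).eval (2 * s : ℤ) : ℤ) : R)
          * (i ^ (2 * s) + (-i) ^ (2 * s)) := by
  simp only [pow_mul, neg_sq, hi, one_pow, eval_add, eval_sub]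
  rcases Nat.even_or_odd s with hs | hs
  · rw [eulerResidue, if_pos hs, hs.neg_one_pow]
    push_cast
    ring
  · rw [eulerResidue, if_neg (Nat.not_even_iff_odd.mpr hs), hs.neg_one_pow]
    push_cast
    ring

theorem eval_mul_add_eval_mul_eq_zero_of_odd {R : Type*} [CommRing R] (p q : ℤ[X]) (i : R)
    {k : ℕ} (hk : Odd k) :
    ((p.eval (k : ℤ) : ℤ) : R) * (1 ^ k + (-1) ^ k)
      + ((q.eval (k : ℤ) : ℤ) : R) * (i ^ k + (-i) ^ k) = 0 := by
  simp only [hk.neg_pow]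
  ring

theorem four_mul_sum_choose_mul_eulerResidue_eq {R : Type*} [CommRing R] {i : R}
    (hi : i ^ 2 = -1) (n : ℕ) :
    4 * ∑ s ∈ range (n + 1), ((2 * n).choose (2 * s) * eulerResidue s : R)
      = ∑ k ∈ range (2 * n + 1), ((2 * n).choose k : R)
          * ((((eulerPoly₀ + eulerPoly₂).eval (k : ℤ) : ℤ) : R) * (1 ^ k + (-1) ^ k)
            + (((eulerPoly₀ - eulerPoly₂).eval (k : ℤ) : ℤ) : R) * (i ^ k + (-i) ^ k)) := by
  rw [sum_range_two_mul_add_one_of_odd_eq_zero, mul_sum]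
  · refine sum_congr rfl fun s _ => ?_
    push_cast
    linear_combination ((2 * n).choose (2 * s) : R) * four_mul_eulerResidue_eq hi s
  · intro r
    rw [eval_mul_add_eval_mul_eq_zero_of_odd _ _ _ (odd_two_mul_add_one r), mul_zero]

local notation "ℤ[i]" => GaussianInt

-- Each of the four binomial sums is divisible by `2 ^ 12` once `2 * n - 4 ≥ 24`.
theorem two_pow_ten_dvd_sum_choose_mul_eulerResidue_of_le (n : ℕ) (hn : 14 ≤ n) :
    (2 ^ 10 : ℤ) ∣ ∑ s ∈ range (n + 1), ((2 * n).choose (2 * s) : ℤ) * eulerResidue s := by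
  obtain ⟨i, hi⟩ : ∃ i : ℤ[i], i ^ 2 = -1 := ⟨Zsqrtd.sqrtd, by rw [sq, Zsqrtd.dmuld]; rfl⟩
  set S : ℤ[i] → ℤ[X] → ℤ[i] := fun z p =>
    ∑ k ∈ range (2 * n + 1), ((2 * n).choose k * p.eval (k : ℤ) : ℤ[i]) * z ^ k
  have hdvd {z : ℤ[i]} (hz : (2 : ℤ[i]) ∣ 1 + z ^ 2) {p : ℤ[X]} (hp : p.natDegree ≤ 4) :
      (2 : ℤ[i]) ^ 12 ∣ S z p :=
    two_pow_dvd_sum_choose_mul_eval_mul_pow hz p (by omega)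
  have hdeg_add : (eulerPoly₀ + eulerPoly₂).natDegree ≤ 4 := by
    unfold eulerPoly₀ eulerPoly₂; compute_degree!
  have hdeg_sub : (eulerPoly₀ - eulerPoly₂).natDegree ≤ 4 := by
    unfold eulerPoly₀ eulerPoly₂; compute_degree!
  have hsplit : 4 * ∑ s ∈ range (n + 1), ((2 * n).choose (2 * s) * eulerResidue s : ℤ[i])
      = S 1 (eulerPoly₀ + eulerPoly₂) + S (-1) (eulerPoly₀ + eulerPoly₂)
        + S i (eulerPoly₀ - eulerPoly₂) + S (-i) (eulerPoly₀ - eulerPoly₂) := by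
    rw [four_mul_sum_choose_mul_eulerResidue_eq hi]
    simp only [S, ← sum_add_distrib]
    exact sum_congr rfl fun k _ => by ring
  have hgauss : (2 : ℤ[i]) ^ 12
      ∣ 4 * ∑ s ∈ range (n + 1), ((2 * n).choose (2 * s) * eulerResidue s : ℤ[i]) := by
    rw [hsplit]
    have hi2 : (2 : ℤ[i]) ∣ 1 + i ^ 2 := ⟨0, by rw [hi]; ring⟩
    exact dvd_add (dvd_add (dvd_add (hdvd ⟨1, by norm_num⟩ hdeg_add)
      (hdvd ⟨1, by norm_num⟩ hdeg_add)) (hdvd hi2 hdeg_sub)) (hdvd (by rwa [neg_sq]) hdeg_sub)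
  have hint : (2 ^ 12 : ℤ)
      ∣ 4 * ∑ s ∈ range (n + 1), ((2 * n).choose (2 * s) : ℤ) * eulerResidue s := by
    refine (Zsqrtd.intCast_dvd_intCast (d := -1) _ _).mp ?_
    exact_mod_cast hgauss
  omega

theorem two_pow_ten_dvd_sum_choose_mul_eulerResidue (n : ℕ) (hn : n ≠ 0) :
    (2 ^ 10 : ℤ) ∣ ∑ s ∈ range (n + 1), ((2 * n).choose (2 * s) : ℤ) * eulerResidue s := by
  rcases lt_or_ge n 14 with h | h
  · exact two_pow_ten_dvd_sum_choose_mul_eulerResidue_of_lt n hn h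
  · exact two_pow_ten_dvd_sum_choose_mul_eulerResidue_of_le n h

theorem eulerE_two_mul_modEq_eulerResidue (r : ℕ) :
    eulerE (2 * r) ≡ eulerResidue r [ZMOD 2 ^ 10] := by
  induction r using Nat.strong_induction_on with
  | _ r ih =>
    rcases Nat.eq_zero_or_pos r with rfl | hr
    · simp [eulerE, eulerResidue, eulerPoly₀]
    have hprev : ∑ s ∈ range r, ((2 * r).choose (2 * s) : ℤ) * eulerE (2 * s)
        ≡ ∑ s ∈ range r, ((2 * r).choose (2 * s) : ℤ) * eulerResidue s [ZMOD 2 ^ 10] :=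
      Int.ModEq.sum fun s hs => (ih s (mem_range.mp hs)).mul_left _
    have hfull : ∑ s ∈ range (r + 1), ((2 * r).choose (2 * s) : ℤ) * eulerE (2 * s)
        ≡ ∑ s ∈ range (r + 1), ((2 * r).choose (2 * s) : ℤ) * eulerResidue s [ZMOD 2 ^ 10] := by
      rw [sum_choose_mul_eulerE hr.ne']
      exact (Int.modEq_zero_iff_dvd.mpr
        (two_pow_ten_dvd_sum_choose_mul_eulerResidue r hr.ne')).symm
    rw [sum_range_succ, sum_range_succ, Nat.choose_self, Nat.cast_one, one_mul, one_mul] at hfull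
    exact Int.ModEq.add_left_cancel hprev hfull

theorem eulerE_mod_1024_of_four_dvd_general (b : ℕ) (h4 : 4 ∣ b) :
    eulerE b ≡ 1 - 11 * (b : ℤ) + 15 * (b : ℤ) ^ 2 + (b : ℤ) ^ 3 - (b : ℤ) ^ 4
      [ZMOD 2 ^ 10] := by
  obtain ⟨k, rfl⟩ := h4
  have h := eulerE_two_mul_modEq_eulerResidue (2 * k)
  rw [show 2 * (2 * k) = 4 * k by ring, eulerResidue, if_pos (even_two_mul k)] at h
  convert h using 1
  simp only [eulerPoly₀, eval_add, eval_sub, eval_mul, eval_pow, eval_X, eval_one, eval_ofNat]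
  push_cast
  ring

theorem eulerE_mod_1024_of_four_dvd (b : ℕ) (hb : Even b) (h4 : 4 ∣ b) :
    eulerE b ≡ 1 - 11 * (b : ℤ) + 15 * (b : ℤ) ^ 2 + (b : ℤ) ^ 3 - (b : ℤ) ^ 4
      [ZMOD 2 ^ 10] :=
  eulerE_mod_1024_of_four_dvd_general b h4
end

section
/- Let b be a nonnegative even integer with 4 | (b - 2). Then E_b ≡ 289 - 91b - 17b^2 - 7b^3 + b^4 (mod 2^{10}). -/
/-!
Let `T f n = ∑ r ≤ n, C(2n, 2r) f r`. The recurrence says `T (E ∘ (2 * ·)) = δ₀`, and `T` is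
unitriangular, hence injective over any ring; so it suffices to exhibit an explicit `f` with
`T f ≡ δ₀ (mod 2¹⁰)`. We take `f` a quartic in `r` twisted by `(-1)^r` and write `2f` as an integer
combination of the functions `s^r C(2r, k)` with `s = ±1`, `k ≤ 4`. In `ℤ[√s]`,
`T (s^r C(2r, k)) n` is the rational part of `C(2n, k) √s^k (1 + √s)^(2n - k)`, and for odd `s`
we have `(1 + √s)² ∈ 2ℤ[√s]`; this gives `2^(n - ⌊k/2⌋) ∣ T (s^r C(2r, k)) n`, which settles
`n ≥ 12`, while `1 ≤ n ≤ 11` is a finite computation.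
-/

open Finset

section EvenChooseTransform

variable {R : Type*} [CommRing R]

variable (R) in
def evenChooseTransform : (ℕ → R) →ₗ[R] (ℕ → R) where
  toFun f n := ∑ r ∈ range (n + 1), ((2 * n).choose (2 * r) : R) * f r
  map_add' f g := by ext n; simp only [Pi.add_apply, mul_add, sum_add_distrib]
  map_smul' c f := by
    ext n; simp only [Pi.smul_apply, smul_eq_mul, RingHom.id_apply, mul_sum, mul_left_comm]

lemma evenChooseTransform_apply (f : ℕ → R) (n : ℕ) :
    evenChooseTransform R f n = ∑ r ∈ range (n + 1), ((2 * n).choose (2 * r) : R) * f r := rfl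

lemma evenChooseTransform_apply_eq_add_sum (f : ℕ → R) (n : ℕ) :
    evenChooseTransform R f n = f n + ∑ r ∈ range n, ((2 * n).choose (2 * r) : R) * f r := by
  rw [evenChooseTransform_apply, sum_range_succ, Nat.choose_self, Nat.cast_one, one_mul, add_comm]

lemma evenChooseTransform_injective : Function.Injective (evenChooseTransform R) := by
  intro f g hfg
  funext n
  induction n using Nat.strong_induction_on with
  | _ n ih =>
    have h := congrFun hfg n
    rw [evenChooseTransform_apply_eq_add_sum, evenChooseTransform_apply_eq_add_sum,
      sum_congr rfl fun r hr => by rw [ih r (mem_range.mp hr)]] at h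
    exact add_right_cancel h

lemma intCast_evenChooseTransform (f : ℕ → ℤ) (n : ℕ) :
    (evenChooseTransform ℤ f n : R) = evenChooseTransform R (fun r => (f r : R)) n := by
  simp [evenChooseTransform_apply]

end EvenChooseTransform

lemma evenChooseTransform_eulerE (n : ℕ) :
    evenChooseTransform ℤ (fun r => eulerE (2 * r)) n = if n = 0 then 1 else 0 := by
  rcases n with _ | k
  · simp [evenChooseTransform_apply, eulerE]
  · rw [evenChooseTransform_apply_eq_add_sum, if_neg k.succ_ne_zero,
      show 2 * (k + 1) = 2 * k + 2 by ring, eulerE, if_pos (even_two_mul k),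
      sum_attach (range (2 * k / 2 + 1)) fun j => ((2 * k + 2).choose (2 * j) : ℤ) * eulerE (2 * j),
      Nat.mul_div_cancel_left k two_pos, neg_add_cancel]

lemma sum_choose_mul_choose_mul_pow {A : Type*} [CommSemiring A] (x : A) (N k : ℕ) :
    ∑ j ∈ range (N + 1), (N.choose j * j.choose k : A) * x ^ j =
      N.choose k * x ^ k * (x + 1) ^ (N - k) := by
  have hvanish : ∀ j < k, (N.choose j * j.choose k : A) * x ^ j = 0 := fun j hj => by
    rw [Nat.choose_eq_zero_of_lt hj, Nat.cast_zero, mul_zero, zero_mul]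
  rcases lt_or_ge N k with hNk | hkN
  · rw [Nat.choose_eq_zero_of_lt hNk, Nat.cast_zero, zero_mul, zero_mul]
    exact sum_eq_zero fun j hj => hvanish j (by rw [mem_range] at hj; omega)
  · rw [← sum_range_add_sum_Ico _ (by omega : k ≤ N + 1),
      sum_eq_zero fun j hj => hvanish j (mem_range.mp hj), zero_add, sum_Ico_eq_sum_range,
      show N + 1 - k = N - k + 1 by omega, add_pow, mul_sum]
    refine sum_congr rfl fun i _ => ?_
    have h := Nat.choose_mul (n := N) (k := k + i) (s := k) (by omega)
    rw [Nat.add_sub_cancel_left] at h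
    rw [← Nat.cast_mul, h, one_pow, pow_add, Nat.cast_mul]
    ring

open Zsqrtd in
lemma two_pow_dvd_one_add_sqrtd_pow {s : ℤ} (hs : Odd s) (M : ℕ) :
    (2 ^ (M / 2) : ℤ√s) ∣ (1 + sqrtd) ^ M := by
  obtain ⟨t, rfl⟩ := hs
  have hsq : (1 + sqrtd : ℤ√(2 * t + 1)) ^ 2 = 2 * (((t + 1 : ℤ) : ℤ√(2 * t + 1)) + sqrtd) := by
    have h : (sqrtd : ℤ√(2 * t + 1)) * sqrtd = ((2 * t + 1 : ℤ) : ℤ√(2 * t + 1)) := dmuld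
    push_cast at h ⊢
    linear_combination h
  rw [← Nat.div_add_mod M 2, pow_add, pow_mul, hsq, mul_pow, Nat.mul_add_div two_pos,
    Nat.mod_div_self, add_zero]
  exact (dvd_mul_right _ _).mul_right _

open Zsqrtd in
lemma re_sum_range_two_mul_mul_sqrtd_pow {s : ℤ} (g : ℕ → ℤ) (n : ℕ) :
    (∑ j ∈ range (2 * n + 1), (g j : ℤ√s) * sqrtd ^ j).re =
      ∑ r ∈ range (n + 1), g (2 * r) * s ^ r := by
  have hpow : ∀ r : ℕ, (sqrtd : ℤ√s) ^ (2 * r) = ((s ^ r : ℤ) : ℤ√s) := fun r => by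
    rw [pow_mul, sq, dmuld, Int.cast_pow]
  induction n with
  | zero => simp
  | succ n ih =>
    rw [show 2 * (n + 1) + 1 = 2 * n + 1 + 1 + 1 by ring, sum_range_succ, sum_range_succ, re_add,
      re_add, ih, sum_range_succ (n := n + 1), show 2 * n + 1 + 1 = 2 * (n + 1) by ring,
      pow_succ _ (2 * n), hpow, hpow]
    simp only [re_mul, im_mul, re_intCast, im_intCast, re_sqrtd, im_sqrtd]
    ring

lemma two_dvd_choose_two_mul_of_odd {k : ℕ} (hk : Odd k) (n : ℕ) : 2 ∣ (2 * n).choose k := by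
  obtain ⟨j, rfl⟩ : ∃ j, k = j + 1 := ⟨k - 1, by grind⟩
  rcases n with _ | m
  · simp
  · have h := Nat.add_one_mul_choose_eq (2 * m + 1) j
    rw [show 2 * m + 1 + 1 = 2 * (m + 1) by ring] at h
    exact (Nat.coprime_two_left.mpr hk).dvd_of_dvd_mul_right (h ▸ dvd_mul_of_dvd_left (dvd_mul_right 2 _) _)

lemma two_pow_dvd_choose_two_mul_mul_two_pow (n k : ℕ) :
    2 ^ (n - k / 2) ∣ (2 * n).choose k * 2 ^ ((2 * n - k) / 2) := by
  rcases lt_or_ge (2 * n) k with hk | hk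
  · simp [Nat.choose_eq_zero_of_lt hk]
  rcases Nat.even_or_odd k with ⟨j, rfl⟩ | hodd
  · rw [show (2 * n - (j + j)) / 2 = n - (j + j) / 2 by omega]
    exact dvd_mul_left _ _
  · rw [show n - k / 2 = (2 * n - k) / 2 + 1 by grind, pow_succ']
    exact mul_dvd_mul_right (two_dvd_choose_two_mul_of_odd hodd n) _

open Zsqrtd in
lemma two_pow_dvd_evenChooseTransform_pow_mul_choose {s : ℤ} (hs : Odd s) (k n : ℕ) :
    (2 : ℤ) ^ (n - k / 2) ∣ evenChooseTransform ℤ (fun r => s ^ r * (2 * r).choose k) n := by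
  have hsum : evenChooseTransform ℤ (fun r => s ^ r * (2 * r).choose k) n =
      (((2 * n).choose k : ℤ√s) * sqrtd ^ k * (sqrtd + 1) ^ (2 * n - k)).re := by
    have h := re_sum_range_two_mul_mul_sqrtd_pow (s := s)
      (fun j => ((2 * n).choose j * j.choose k : ℤ)) n
    push_cast at h
    rw [← sum_choose_mul_choose_mul_pow, h, evenChooseTransform_apply]
    exact sum_congr rfl fun r _ => by ring
  rw [hsum]
  refine ((intCast_dvd _ _).mp ?_).1
  have hcoeff := Int.natCast_dvd_natCast.mpr (two_pow_dvd_choose_two_mul_mul_two_pow n k)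
  push_cast at hcoeff
  calc ((2 ^ (n - k / 2) : ℤ) : ℤ√s)
      ∣ ((2 * n).choose k * 2 ^ ((2 * n - k) / 2) : ℤ) := map_dvd (Int.castRingHom _) hcoeff
    _ ∣ ((2 * n).choose k : ℤ√s) * sqrtd ^ k * (sqrtd + 1) ^ (2 * n - k) := by
      push_cast
      rw [mul_right_comm, add_comm]
      exact (mul_dvd_mul_left _ (two_pow_dvd_one_add_sqrtd_pow hs _)).mul_right _

/-- Covers both parities of `r`, since the recurrence mixes them; for odd `r` it is the quartic of
the theorem at `b = 2 * r`. -/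
def eulerApprox (r : ℕ) : ℤ :=
  8 * r ^ 4 - 24 * r ^ 3 - 36 * r ^ 2 - 102 * r + 145 +
    (-1) ^ r * (-8 * r ^ 4 + 32 * r ^ 3 + 32 * r ^ 2 + 80 * r - 144)

lemma factorial_mul_choose_eq_descPochhammer_eval (m k : ℕ) :
    (k.factorial * m.choose k : ℤ) = (descPochhammer ℤ k).eval (m : ℤ) := by
  rw [descPochhammer_eval_eq_descFactorial, Nat.descFactorial_eq_factorial_mul_choose]
  push_cast
  rfl

lemma two_smul_eulerApprox :
    (2 : ℤ) • eulerApprox = ∑ k : Fin 5,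
      (![290, -125, -58, 0, 24] k • (fun r : ℕ => (1 : ℤ) ^ r * (2 * r).choose k) +
        ![-288, 103, 66, 12, -24] k • (fun r : ℕ => (-1 : ℤ) ^ r * (2 * r).choose k)) := by
  funext r
  have h2 := factorial_mul_choose_eq_descPochhammer_eval (2 * r) 2
  have h3 := factorial_mul_choose_eq_descPochhammer_eval (2 * r) 3
  have h4 := factorial_mul_choose_eq_descPochhammer_eval (2 * r) 4
  simp only [Nat.factorial, descPochhammer_succ_eval, descPochhammer_one, Polynomial.eval_X] at h2 h3 h4
  simp only [eulerApprox, Finset.sum_apply, Fin.sum_univ_five, Pi.add_apply, Pi.smul_apply,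
    smul_eq_mul, Matrix.cons_val, Fin.coe_ofNat_eq_mod, Nat.reduceMod, Nat.choose_zero_right,
    Nat.choose_one_right, one_pow]
  push_cast at h2 h3 h4 ⊢
  linear_combination (29 - 33 * (-1 : ℤ) ^ r) * h2 - 2 * (-1 : ℤ) ^ r * h3 + (-1 + (-1 : ℤ) ^ r) * h4

lemma two_pow_dvd_evenChooseTransform_two_smul_eulerApprox {n : ℕ} (hn : 2 ≤ n) :
    (2 : ℤ) ^ n ∣ evenChooseTransform ℤ ((2 : ℤ) • eulerApprox) n := by
  rw [two_smul_eulerApprox, map_sum, Finset.sum_apply]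
  refine dvd_sum fun k _ => ?_
  simp only [map_add, map_smul, Pi.add_apply, Pi.smul_apply, smul_eq_mul]
  have hdvd : ∀ {s c : ℤ}, Odd s → 2 ^ (k / 2 : ℕ) ∣ c →
      2 ^ n ∣ c * evenChooseTransform ℤ (fun r => s ^ r * (2 * r).choose k) n := fun hs hc =>
    pow_mul_pow_sub (2 : ℤ) (by omega : (k : ℕ) / 2 ≤ n) ▸
      mul_dvd_mul hc (two_pow_dvd_evenChooseTransform_pow_mul_choose hs k n)
  exact dvd_add (hdvd odd_one (by fin_cases k <;> decide))
    (hdvd odd_neg_one (by fin_cases k <;> decide))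

lemma two_pow_ten_dvd_evenChooseTransform_eulerApprox {n : ℕ} (hn : n ≠ 0) :
    (2 : ℤ) ^ 10 ∣ evenChooseTransform ℤ eulerApprox n := by
  rcases lt_or_ge n 12 with hsmall | hlarge
  · have hpos : 0 < n := Nat.pos_of_ne_zero hn
    interval_cases n <;>
      norm_num [evenChooseTransform_apply, sum_range_succ, eulerApprox,
        Nat.choose_eq_descFactorial_div_factorial, Nat.descFactorial]
  · have h := two_pow_dvd_evenChooseTransform_two_smul_eulerApprox (n := n) (by omega)
    rw [map_smul, Pi.smul_apply, smul_eq_mul] at h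
    exact (mul_dvd_mul_iff_left two_ne_zero).mp ((pow_dvd_pow 2 (by omega : 11 ≤ n)).trans h)

lemma eulerE_two_mul_modEq_eulerApprox (r : ℕ) : eulerE (2 * r) ≡ eulerApprox r [ZMOD 2 ^ 10] := by
  have hT : evenChooseTransform (ZMod (2 ^ 10)) (fun r => (eulerE (2 * r) : ZMod (2 ^ 10))) =
      evenChooseTransform (ZMod (2 ^ 10)) (fun r => (eulerApprox r : ZMod (2 ^ 10))) := by
    funext n
    rw [← intCast_evenChooseTransform, ← intCast_evenChooseTransform, evenChooseTransform_eulerE]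
    rcases eq_or_ne n 0 with rfl | hn
    · simp [evenChooseTransform_apply, eulerApprox]
    · rw [if_neg hn, Int.cast_zero, eq_comm, ZMod.intCast_zmod_eq_zero_iff_dvd]
      exact_mod_cast two_pow_ten_dvd_evenChooseTransform_eulerApprox hn
  exact (ZMod.intCast_eq_intCast_iff' ..).mp (congrFun (evenChooseTransform_injective hT) r)

theorem eulerE_mod_1024_of_four_dvd_sub_two_general (b : ℕ)
    (h4 : (4 : ℤ) ∣ ((b : ℤ) - 2)) :
    eulerE b ≡ 289 - 91 * (b : ℤ) - 17 * (b : ℤ) ^ 2 - 7 * (b : ℤ) ^ 3 + (b : ℤ) ^ 4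
      [ZMOD 2 ^ 10] := by
  obtain ⟨t, rfl⟩ : ∃ t, b = 2 * t := ⟨b / 2, by omega⟩
  have ht : Odd t := Nat.odd_iff.mpr (by omega)
  convert eulerE_two_mul_modEq_eulerApprox t using 1
  rw [eulerApprox, ht.neg_one_pow]
  push_cast
  ring

theorem eulerE_mod_1024_of_four_dvd_sub_two (b : ℕ) (hb : Even b)
    (h4 : (4 : ℤ) ∣ ((b : ℤ) - 2)) :
    eulerE b ≡ 289 - 91 * (b : ℤ) - 17 * (b : ℤ) ^ 2 - 7 * (b : ℤ) ^ 3 + (b : ℤ) ^ 4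
      [ZMOD 2 ^ 10] :=
  eulerE_mod_1024_of_four_dvd_sub_two_general b h4
end
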